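/- arXiv:2302.10013 — 3 statements merged into one kernel-verified Lean document; each statement's English description precedes it below -/
import Mathlib

section
/- Let H be a complex Hilbert space, N ≥ 1, Ω ∈ H, and let e_1, …, e_N be bounded operators on H that are orthogonal projections (e_i* = e_i, e_i² = e_i), pairwise orthogonal (e_i e_j = 0 for i ≠ j), satisfy Σ_{i=1}^N e_i = 1, and e_i Ω ≠ 0 for every i. Then for every t > 0 and every ξ ∈ H: inf_{ζ ∈ H} ( t·|⟨Ω, ζ⟩|² + Σ_{i=1}^N |⟨e_i Ω, ξ − ζ⟩|² ) = ( t / (N·t + 1) ) · |⟨Ω, ξ⟩|². -/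
/-!
Since `∑ i, e i = 1` with each `e i` self-adjoint, `⟪Ω, ζ⟫ = ⟪Ω, ξ⟫ - ∑ i, b i` where
`b i = ⟪e i Ω, ξ - ζ⟫`. The vectors `e i Ω` are pairwise orthogonal and nonzero, so `ζ` can
prescribe the `b i` arbitrarily, and the infimum becomes the minimum over `b ∈ ℂᴺ` of
`t |s - ∑ b i|² + ∑ |b i|²` with `s = ⟪Ω, ξ⟫`. Weighted Cauchy–Schwarz (weights `t, 1, …, 1`)
bounds this below by `t |s|² / (N t + 1)`, with equality at `b i = t s / (N t + 1)`.
-/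

open scoped InnerProductSpace
open Finset

namespace BSPaper

lemma sq_add_sum_le_inv_add_card_mul {ι : Type*} [Fintype ι] {t : ℝ} (ht : 0 < t) (x : ℝ)
    (y : ι → ℝ) :
    (x + ∑ i, y i) ^ 2 ≤ (t⁻¹ + Fintype.card ι) * (t * x ^ 2 + ∑ i, y i ^ 2) := by
  have h := sum_sq_le_sum_mul_sum_of_sq_le_mul (univ : Finset (Option ι))
    (r := fun o => o.elim x y) (f := fun o => o.elim t⁻¹ 1)
    (g := fun o => o.elim (t * x ^ 2) (y · ^ 2))
    (by rintro (_ | _) _ <;> simp [ht.le])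
    (by rintro (_ | _) _ <;> simp [sq_nonneg, ht.le, mul_nonneg])
    (by rintro (_ | _) _ <;> simp [inv_mul_cancel_left₀ ht.ne'])
  simpa [Fintype.sum_option] using h

def reducedObjective {ι : Type*} [Fintype ι] (t : ℝ) (s : ℂ) (b : ι → ℂ) : ℝ :=
  t * Complex.normSq (s - ∑ i, b i) + ∑ i, Complex.normSq (b i)

section ReducedObjective

variable {ι : Type*} [Fintype ι] {t : ℝ}

lemma div_mul_normSq_le_reducedObjective (ht : 0 < t) (s : ℂ) (b : ι → ℂ) :
    t / (Fintype.card ι * t + 1) * Complex.normSq s ≤ reducedObjective t s b := by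
  have hpos : 0 < Fintype.card ι * t + 1 := by positivity
  have htri : ‖s‖ ≤ ‖s - ∑ i, b i‖ + ∑ i, ‖b i‖ := calc
    ‖s‖ = ‖(s - ∑ i, b i) + ∑ i, b i‖ := by rw [sub_add_cancel]
    _ ≤ ‖s - ∑ i, b i‖ + ∑ i, ‖b i‖ :=
      (norm_add_le _ _).trans (by gcongr; exact norm_sum_le _ _)
  have hsq : ‖s‖ ^ 2 ≤ (t⁻¹ + Fintype.card ι) * (t * ‖s - ∑ i, b i‖ ^ 2 + ∑ i, ‖b i‖ ^ 2) :=
    (pow_le_pow_left₀ (norm_nonneg _) htri 2).trans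
      (sq_add_sum_le_inv_add_card_mul ht ‖s - ∑ i, b i‖ (‖b ·‖))
  simp only [reducedObjective, ← Complex.sq_norm]
  rw [div_mul_eq_mul_div, div_le_iff₀ hpos]
  calc t * ‖s‖ ^ 2
      ≤ t * ((t⁻¹ + Fintype.card ι) * (t * ‖s - ∑ i, b i‖ ^ 2 + ∑ i, ‖b i‖ ^ 2)) := by gcongr
    _ = _ := by field_simp; ring

lemma reducedObjective_const (ht : 0 < t) (s : ℂ) :
    reducedObjective t s (fun _ : ι => ((t / (Fintype.card ι * t + 1) : ℝ) : ℂ) * s)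
      = t / (Fintype.card ι * t + 1) * Complex.normSq s := by
  have hpos : 0 < Fintype.card ι * t + 1 := by positivity
  have hcoef : 1 - Fintype.card ι * (t / (Fintype.card ι * t + 1))
      = 1 / (Fintype.card ι * t + 1) := by
    field_simp
    ring
  have hrest : s - ∑ _i : ι, ((t / (Fintype.card ι * t + 1) : ℝ) : ℂ) * s
      = ((1 / (Fintype.card ι * t + 1) : ℝ) : ℂ) * s := by
    rw [← hcoef, sum_const, card_univ, nsmul_eq_mul]
    push_cast
    ring
  rw [reducedObjective, hrest, sum_const, card_univ, nsmul_eq_mul, Complex.normSq_mul,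
    Complex.normSq_mul, Complex.normSq_ofReal, Complex.normSq_ofReal]
  field_simp
  ring

end ReducedObjective

section InnerProductSpace

variable {𝕜 E ι : Type*} [RCLike 𝕜] [NormedAddCommGroup E] [InnerProductSpace 𝕜 E] [Fintype ι]

lemma exists_inner_eq_of_pairwise_inner_eq_zero {v : ι → E}
    (horth : Pairwise fun i j => ⟪v i, v j⟫_𝕜 = 0) (hv : ∀ i, v i ≠ 0) (c : ι → 𝕜) :
    ∃ ζ : E, ∀ i, ⟪v i, ζ⟫_𝕜 = c i := by
  refine ⟨∑ j, (c j / ⟪v j, v j⟫_𝕜) • v j, fun i => ?_⟩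
  rw [inner_sum, sum_eq_single i (fun j _ hji => by rw [inner_smul_right, horth hji.symm, mul_zero])
    (fun hi => absurd (mem_univ i) hi), inner_smul_right,
    div_mul_cancel₀ _ (inner_self_ne_zero.mpr (hv i))]

variable [CompleteSpace E]

lemma IsSelfAdjoint.inner_apply_apply_eq_zero {T S : E →L[𝕜] E} (hT : IsSelfAdjoint T)
    (hTS : T * S = 0) (x y : E) : ⟪T x, S y⟫_𝕜 = 0 :=
  calc ⟪T x, S y⟫_𝕜 = ⟪x, (T * S) y⟫_𝕜 := hT.isSymmetric x (S y)
    _ = 0 := by rw [hTS, zero_apply, inner_zero_right]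

lemma inner_eq_sum_inner_apply {e : ι → E →L[𝕜] E} (hsa : ∀ i, IsSelfAdjoint (e i))
    (hsum : ∑ i, e i = 1) (x y : E) : ⟪x, y⟫_𝕜 = ∑ i, ⟪e i x, y⟫_𝕜 := by
  have hy : (∑ i, e i) y = y := by rw [hsum]; rfl
  conv_lhs => rw [← hy, _root_.sum_apply, inner_sum]
  exact sum_congr rfl fun i _ => ((hsa i).isSymmetric x y).symm

end InnerProductSpace

theorem measurement_parallel_sum_general {H : Type*} [NormedAddCommGroup H]
    [InnerProductSpace ℂ H] [CompleteSpace H]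
    (N : ℕ) (Ω : H) (e : Fin N → (H →L[ℂ] H))
    (hsa : ∀ i, IsSelfAdjoint (e i))
    (horth : ∀ i j, i ≠ j → e i * e j = 0)
    (hsum : ∑ i, e i = 1)
    (hne : ∀ i, e i Ω ≠ 0)
    (t : ℝ) (ht : 0 < t) (ξ : H) :
    (⨅ ζ : H, (t * Complex.normSq ⟪Ω, ζ⟫_ℂ
        + ∑ i, Complex.normSq ⟪e i Ω, ξ - ζ⟫_ℂ))
      = (t / (N * t + 1)) * Complex.normSq ⟪Ω, ξ⟫_ℂ := by
  have hreduce (ζ : H) : t * Complex.normSq ⟪Ω, ζ⟫_ℂ + ∑ i, Complex.normSq ⟪e i Ω, ξ - ζ⟫_ℂ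
      = reducedObjective t ⟪Ω, ξ⟫_ℂ fun i => ⟪e i Ω, ξ - ζ⟫_ℂ := by
    rw [reducedObjective, ← inner_eq_sum_inner_apply hsa hsum, inner_sub_right, sub_sub_cancel]
  have horthΩ : Pairwise fun i j => ⟪e i Ω, e j Ω⟫_ℂ = 0 := fun i j hij =>
    IsSelfAdjoint.inner_apply_apply_eq_zero (hsa i) (horth i j hij) Ω Ω
  obtain ⟨ζ₀, hζ₀⟩ := exists_inner_eq_of_pairwise_inner_eq_zero horthΩ hne
    fun _ => ((t / (N * t + 1) : ℝ) : ℂ) * ⟪Ω, ξ⟫_ℂ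
  refine (IsLeast.isGLB ⟨Set.mem_range.mpr ⟨ξ - ζ₀, ?_⟩, ?_⟩).ciInf_eq
  · rw [hreduce, sub_sub_cancel]
    simpa only [hζ₀, Fintype.card_fin] using reducedObjective_const (ι := Fin N) ht ⟪Ω, ξ⟫_ℂ
  · rintro _ ⟨ζ, rfl⟩
    dsimp only
    rw [hreduce]
    simpa only [Fintype.card_fin] using div_mul_normSq_le_reducedObjective ht ⟪Ω, ξ⟫_ℂ
      fun i => ⟪e i Ω, ξ - ζ⟫_ℂ

/-- The parallel-sum computation for an `N`-ary measurement: for mutually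
orthogonal nonzero projections `e_1, …, e_N` summing to `1` with `e_i Ω ≠ 0`, and `t > 0`,
`inf_ζ ( t·|⟨Ω, ζ⟩|² + Σ_i |⟨e_i Ω, ξ − ζ⟩|² ) = (t/(N t + 1))·|⟨Ω, ξ⟩|²`. -/
theorem measurement_parallel_sum {H : Type*} [NormedAddCommGroup H]
    [InnerProductSpace ℂ H] [CompleteSpace H]
    (N : ℕ) (hN : 1 ≤ N) (Ω : H) (e : Fin N → (H →L[ℂ] H))
    (hsa : ∀ i, IsSelfAdjoint (e i))
    (hidem : ∀ i, e i * e i = e i)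
    (horth : ∀ i j, i ≠ j → e i * e j = 0)
    (hsum : ∑ i, e i = 1)
    (hne : ∀ i, e i Ω ≠ 0)
    (t : ℝ) (ht : 0 < t) (ξ : H) :
    (⨅ ζ : H, (t * Complex.normSq ⟪Ω, ζ⟫_ℂ
        + ∑ i, Complex.normSq ⟪e i Ω, ξ - ζ⟫_ℂ))
      = (t / (N * t + 1)) * Complex.normSq ⟪Ω, ξ⟫_ℂ :=
  measurement_parallel_sum_general N Ω e hsa horth hsum hne t ht ξ

end BSPaper
end

section
/- Let H be a complex Hilbert space, let P and Q be orthogonal projections on H (bounded, self-adjoint, idempotent), let t > 0, and let R denote the orthogonal projection onto the closed subspace (range P) ∩ (range Q). Then for every ξ ∈ H: inf_{ζ ∈ H} ( t·‖P ζ‖² + ‖Q(ξ − ζ)‖² ) = ( t / (t + 1) ) · ‖R ξ‖². -/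
/-!
Lower bound: `Rξ` is fixed by `P` and `Q`, so
`‖Rξ‖² = ⟪Rξ, Pζ⟫ + ⟪Rξ, Q(ξ - ζ)⟫ ≤ ‖Rξ‖ (‖Pζ‖ + ‖Q(ξ - ζ)‖)`, and
`t a² + b² ≥ t/(t+1) (a + b)²` since the difference is `(t a - b)² / (t + 1)`.

Upper bound: if `v ⊥ Q(ker P)` then `Qv ∈ (ker P)ᗮ = range P`, so `Qv ∈ range R` and
`Rv = RQv = Qv`; hence `v ⊥ Qξ - Rξ`, i.e. `Qξ - Rξ` lies in the closure of `Q(ker P)`.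
Taking `ζ = Rξ/(t+1) + w` with `w ∈ ker P` and `Qw` close to `Qξ - Rξ` gives
`t‖Pζ‖² + ‖Q(ξ - ζ)‖² ≈ t‖Rξ‖²/(t+1)² + t²‖Rξ‖²/(t+1)² = t/(t+1) ‖Rξ‖²`.
-/

open scoped InnerProductSpace

theorem IsIdempotentElem.apply_eq_self_of_mem_range {R M : Type*} [Semiring R]
    [TopologicalSpace M] [AddCommMonoid M] [Module R M] {p : M →L[R] M}
    (hp : IsIdempotentElem p) {x : M} (hx : x ∈ Set.range p) : p x = x := by
  obtain ⟨y, rfl⟩ := hx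
  exact congr($hp y)

theorem div_add_one_mul_sq_le_mul_sq_add_sq {t r a b : ℝ} (ht : 0 ≤ t) (hr : 0 ≤ r)
    (hrab : r ≤ a + b) : t / (t + 1) * r ^ 2 ≤ t * a ^ 2 + b ^ 2 := by
  have hr2 : r ^ 2 ≤ (a + b) ^ 2 := pow_le_pow_left₀ hr hrab 2
  rw [div_mul_eq_mul_div, div_le_iff₀ (by linarith)]
  nlinarith [sq_nonneg (t * a - b), mul_le_mul_of_nonneg_left hr2 ht]

section

variable {𝕜 E : Type*} [RCLike 𝕜] [NormedAddCommGroup E] [InnerProductSpace 𝕜 E]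
  [CompleteSpace E]

theorem IsSelfAdjoint.inner_apply_left {A : E →L[𝕜] E} (hA : IsSelfAdjoint A) (x y : E) :
    ⟪A x, y⟫_𝕜 = ⟪x, A y⟫_𝕜 :=
  hA.isSymmetric x y

theorem IsStarProjection.orthogonal_ker {p : E →L[𝕜] E} (hp : IsStarProjection p) :
    p.kerᗮ = p.range := by
  have := (ContinuousLinearMap.IsStarProjection.isSymmetricProjection hp)
    |>.hasOrthogonalProjection_range
  rw [← hp.isSelfAdjoint.isSymmetric.orthogonal_range, Submodule.orthogonal_orthogonal]

theorem IsStarProjection.re_inner_apply_self {p : E →L[𝕜] E} (hp : IsStarProjection p) (x : E) :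
    RCLike.re ⟪p x, x⟫_𝕜 = ‖p x‖ ^ 2 := by
  rw [← inner_self_eq_norm_sq (𝕜 := 𝕜), ← hp.isSelfAdjoint.inner_apply_left,
    hp.isIdempotentElem.apply_eq_self_of_mem_range ⟨x, rfl⟩]

theorem re_inner_le_norm_mul_add {P Q : E →L[𝕜] E} (hP : IsSelfAdjoint P) (hQ : IsSelfAdjoint Q)
    {x : E} (hPx : P x = x) (hQx : Q x = x) (ξ ζ : E) :
    RCLike.re ⟪x, ξ⟫_𝕜 ≤ ‖x‖ * (‖P ζ‖ + ‖Q (ξ - ζ)‖) := by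
  have hsplit : ⟪x, ξ⟫_𝕜 = ⟪x, P ζ⟫_𝕜 + ⟪x, Q (ξ - ζ)⟫_𝕜 := by
    rw [← hP.inner_apply_left, ← hQ.inner_apply_left, hPx, hQx, ← inner_add_right, add_sub_cancel]
  rw [hsplit, map_add, mul_add]
  exact add_le_add (re_inner_le_norm _ _) (re_inner_le_norm _ _)

theorem norm_apply_le_of_range_subset {P Q R : E →L[𝕜] E} (hP : IsStarProjection P)
    (hQ : IsStarProjection Q) (hR : IsStarProjection R)
    (hRPQ : Set.range R ⊆ Set.range P ∩ Set.range Q) (ξ ζ : E) :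
    ‖R ξ‖ ≤ ‖P ζ‖ + ‖Q (ξ - ζ)‖ := by
  have hRξ := hRPQ ⟨ξ, rfl⟩
  have key := re_inner_le_norm_mul_add hP.isSelfAdjoint hQ.isSelfAdjoint
    (hP.isIdempotentElem.apply_eq_self_of_mem_range hRξ.1)
    (hQ.isIdempotentElem.apply_eq_self_of_mem_range hRξ.2) ξ ζ
  rw [hR.re_inner_apply_self, sq] at key
  rcases (norm_nonneg (R ξ)).eq_or_lt with h | h
  · rw [← h]; positivity
  · exact le_of_mul_le_mul_left key h

theorem IsStarProjection.mul_eq_left_of_range_subset {p q : E →L[𝕜] E} (hp : IsStarProjection p)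
    (hq : IsStarProjection q) (hpq : Set.range p ⊆ Set.range q) : p * q = p := by
  have hqp : q * p = p :=
    ContinuousLinearMap.ext fun x => hq.isIdempotentElem.apply_eq_self_of_mem_range (hpq ⟨x, rfl⟩)
  simpa [hp.isSelfAdjoint.star_eq, hq.isSelfAdjoint.star_eq] using congr(star $hqp)

theorem IsStarProjection.sub_apply_mem_closure_map_ker {P Q R : E →L[𝕜] E}
    (hP : IsStarProjection P) (hQ : IsStarProjection Q) (hR : IsStarProjection R)
    (hRPQ : Set.range R = Set.range P ∩ Set.range Q) (ξ : E) :
    Q ξ - R ξ ∈ (P.ker.map (Q : E →ₗ[𝕜] E)).topologicalClosure := by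
  rw [← Submodule.orthogonal_orthogonal_eq_closure]
  intro v hv
  have hQv : Q v ∈ P.range := by
    rw [← hP.orthogonal_ker]
    intro w hw
    rw [← hQ.isSelfAdjoint.inner_apply_left]
    exact hv _ ⟨w, hw, rfl⟩
  have hRv : R v = Q v := by
    have hRQ := hR.mul_eq_left_of_range_subset hQ (hRPQ ▸ Set.inter_subset_right)
    calc R v = (R * Q) v := by rw [hRQ]
      _ = Q v := hR.isIdempotentElem.apply_eq_self_of_mem_range (hRPQ ▸ ⟨hQv, v, rfl⟩)
  rw [inner_sub_right, ← hQ.isSelfAdjoint.inner_apply_left, ← hR.isSelfAdjoint.inner_apply_left,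
    hRv, sub_self]

theorem IsStarProjection.iInf_mul_norm_sq_add_norm_sq_le {P Q R : E →L[𝕜] E}
    (hP : IsStarProjection P) (hQ : IsStarProjection Q) (hR : IsStarProjection R)
    (hRPQ : Set.range R = Set.range P ∩ Set.range Q) {t : ℝ} (ht : 0 ≤ t) (ξ : E) :
    ⨅ ζ, (t * ‖P ζ‖ ^ 2 + ‖Q (ξ - ζ)‖ ^ 2) ≤ t / (t + 1) * ‖R ξ‖ ^ 2 := by
  set c : ℝ := (t + 1)⁻¹
  set m := ⨅ ζ, (t * ‖P ζ‖ ^ 2 + ‖Q (ξ - ζ)‖ ^ 2)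
  -- `φ (Q w)` is the objective at `ζ = c • Rξ + w` when `w ∈ ker P`
  let φ : E → ℝ := fun v => t * ‖(c : 𝕜) • R ξ‖ ^ 2 + ‖Q ξ - (c : 𝕜) • R ξ - v‖ ^ 2
  have hRξ := (hRPQ ▸ Set.mem_range_self ξ : R ξ ∈ Set.range P ∩ Set.range Q)
  have hle : ∀ w ∈ P.ker, m ≤ φ (Q w) := by
    intro w hw
    have hbdd : BddBelow (Set.range fun ζ => t * ‖P ζ‖ ^ 2 + ‖Q (ξ - ζ)‖ ^ 2) :=
      ⟨0, by rintro _ ⟨ζ, rfl⟩; positivity⟩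
    refine (ciInf_le hbdd ((c : 𝕜) • R ξ + w)).trans_eq ?_
    replace hw : P w = 0 := hw
    simp only [φ, map_add, map_sub, map_smul, hw, add_zero, sub_add_eq_sub_sub,
      hP.isIdempotentElem.apply_eq_self_of_mem_range hRξ.1,
      hQ.isIdempotentElem.apply_eq_self_of_mem_range hRξ.2]
  have hclosure : Q ξ - R ξ ∈ {v | m ≤ φ v} := by
    refine closure_minimal ?_ (isClosed_le continuous_const (by fun_prop))
      (hP.sub_apply_mem_closure_map_ker hQ hR hRPQ ξ)
    rintro _ ⟨w, hw, rfl⟩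
    exact hle w hw
  refine hclosure.trans_eq ?_
  have hc : c * (t + 1) = 1 := inv_mul_cancel₀ (by positivity)
  have hsub : Q ξ - (c : 𝕜) • R ξ - (Q ξ - R ξ) = ((t * c : ℝ) : 𝕜) • R ξ := by
    rw [show t * c = 1 - c by linear_combination hc]
    push_cast
    module
  have hc0 : 0 ≤ c := by positivity
  simp only [φ, hsub, norm_smul, RCLike.norm_ofReal, abs_of_nonneg hc0,
    abs_of_nonneg (mul_nonneg ht hc0), div_eq_mul_inv]
  linear_combination t * ‖R ξ‖ ^ 2 * c * hc

theorem IsStarProjection.iInf_mul_norm_sq_add_norm_sq_eq {P Q R : E →L[𝕜] E}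
    (hP : IsStarProjection P) (hQ : IsStarProjection Q) (hR : IsStarProjection R)
    (hRPQ : Set.range R = Set.range P ∩ Set.range Q) {t : ℝ} (ht : 0 ≤ t) (ξ : E) :
    ⨅ ζ, (t * ‖P ζ‖ ^ 2 + ‖Q (ξ - ζ)‖ ^ 2) = t / (t + 1) * ‖R ξ‖ ^ 2 :=
  le_antisymm (hP.iInf_mul_norm_sq_add_norm_sq_le hQ hR hRPQ ht ξ) <| le_ciInf fun ζ =>
    div_add_one_mul_sq_le_mul_sq_add_sq ht (norm_nonneg _)
      (norm_apply_le_of_range_subset hP hQ hR hRPQ.subset ξ ζ)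

end

namespace BSPaper

/-- Parallel sum of two scaled projections: if `P, Q` are orthogonal
projections on a complex Hilbert space, `R` is the orthogonal projection onto
`range P ∩ range Q`, and `t > 0`, then for every `ξ`,
`inf_ζ ( t‖Pζ‖² + ‖Q(ξ−ζ)‖² ) = (t/(t+1))·‖Rξ‖²`, i.e. `(tP):Q = (t/(t+1))·(P ∧ Q)`. -/
theorem projection_parallel_sum {H : Type*} [NormedAddCommGroup H]
    [InnerProductSpace ℂ H] [CompleteSpace H]
    (P Q R : H →L[ℂ] H)
    (hPsa : IsSelfAdjoint P) (hP : P * P = P)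
    (hQsa : IsSelfAdjoint Q) (hQ : Q * Q = Q)
    (hRsa : IsSelfAdjoint R) (hR : R * R = R)
    (hRrange : Set.range R = Set.range P ∩ Set.range Q)
    (t : ℝ) (ht : 0 < t) (ξ : H) :
    (⨅ ζ : H, (t * ‖P ζ‖ ^ 2 + ‖Q (ξ - ζ)‖ ^ 2)) = (t / (t + 1)) * ‖R ξ‖ ^ 2 :=
  IsStarProjection.iInf_mul_norm_sq_add_norm_sq_eq ⟨hP, hPsa⟩ ⟨hQ, hQsa⟩ ⟨hR, hRsa⟩ hRrange ht.le ξ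

end BSPaper
end

section
/- Let H be a complex Hilbert space, let M be a von Neumann algebra on H, and let Ω ∈ H be a separating vector for M (i.e. m ∈ M and mΩ = 0 imply m = 0). Let N ≥ 1 and let a_1, …, a_N and b_1, …, b_N be elements of M satisfying the Cuntz relations: a_i* a_j = δ_{ij}·1, Σ_i a_i a_i* = 1, b_i* b_j = δ_{ij}·1, Σ_i b_i b_i* = 1. If a_i Ω lies in the linear span of {b_1 Ω, …, b_N Ω} for every i, then there exists a unitary N×N complex matrix R = (R_{ij}) such that a_i = Σ_{j=1}^N R_{ij} b_j for every i, and consequently Σ_{i=1}^N a_i* m a_i = Σ_{i=1}^N b_i* m b_i for every m ∈ M (i.e. the two Kraus channels coincide). -/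
/-!
Because `Ω` is separating, the span hypothesis lifts from vectors to operators: `a i = ∑ j, R i j • b j`
for some matrix `R`. Substituting this into `star (a i) * a j = δ i j` and using `star (b k) * b l = δ k l`
gives `(R * star R) j i • 1 = δ i j • 1`, so `R` is unitary as soon as the algebra is nontrivial (and there
is nothing to prove otherwise). Substituting it into `∑ i, star (a i) * m * a i` and summing over `i`
first, `star R * R = 1` collapses the double sum to `∑ k, star (b k) * m * b k`.
-/

namespace BSPaper

open Finset

theorem exists_eq_sum_smul_of_injective {K E F ι : Type*} [Fintype ι] [Semiring K]
    [AddCommMonoid E] [Module K E] [AddCommMonoid F] [Module K F]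
    (f : E →ₗ[K] F) (hf : Function.Injective f) {x : E} {b : ι → E}
    (h : f x ∈ Submodule.span K (Set.range (f ∘ b))) : ∃ c : ι → K, x = ∑ i, c i • b i := by
  obtain ⟨c, hc⟩ := (Submodule.mem_span_range_iff_exists_fun K).mp h
  exact ⟨c, hf (by simpa only [map_sum, map_smul, Function.comp_apply] using hc.symm)⟩

section KrausExpansion

variable {R A ι : Type*} [Fintype ι] [CommSemiring R] [StarRing R] [Semiring A] [StarRing A]
  [Algebra R A] [StarModule R A]

theorem star_sum_smul_mul_mul_sum_smul (b : ι → A) (x y : ι → R) (m : A) :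
    star (∑ k, x k • b k) * m * ∑ l, y l • b l =
      ∑ k, ∑ l, (star (x k) * y l) • (star (b k) * m * b l) := by
  simp only [star_sum, star_smul, sum_mul, mul_sum, smul_mul_assoc, mul_smul_comm, smul_sum,
    smul_smul, mul_comm (y _)]
  exact sum_comm

theorem star_sum_smul_mul_sum_smul_of_orthonormal {b : ι → A} [DecidableEq ι]
    (hb : ∀ k l, star (b k) * b l = if k = l then 1 else 0) (x y : ι → R) :
    star (∑ k, x k • b k) * ∑ l, y l • b l = (∑ k, star (x k) * y k) • 1 := by
  simpa only [mul_one, hb, smul_ite, smul_zero, sum_ite_eq, mem_univ, if_true, sum_smul] using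
    star_sum_smul_mul_mul_sum_smul b x y 1

theorem sum_star_mul_mul_eq_of_star_mul_self_eq_one [DecidableEq ι] {U : Matrix ι ι R}
    (hU : star U * U = 1) {a b : ι → A} (hab : ∀ i, a i = ∑ j, U i j • b j) (m : A) :
    ∑ i, star (a i) * m * a i = ∑ i, star (b i) * m * b i := by
  have hcol : ∀ k l, ∑ i, star (U i k) * U i l = if k = l then 1 else 0 := fun k l => by
    simpa only [Matrix.mul_apply, Matrix.star_apply, Matrix.one_apply] using congr_fun₂ hU k l
  calc ∑ i, star (a i) * m * a i
      = ∑ i, ∑ k, ∑ l, (star (U i k) * U i l) • (star (b k) * m * b l) := by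
        simp only [hab, star_sum_smul_mul_mul_sum_smul]
    _ = ∑ k, ∑ l, (∑ i, star (U i k) * U i l) • (star (b k) * m * b l) := by
        simp only [sum_smul]
        rw [sum_comm]
        exact sum_congr rfl fun k _ => sum_comm
    _ = ∑ k, star (b k) * m * b k := by
        simp only [hcol, ite_smul, one_smul, zero_smul, sum_ite_eq, mem_univ, if_true]

end KrausExpansion

theorem mem_unitaryGroup_of_orthonormal {𝕜 A ι : Type*} [Fintype ι] [DecidableEq ι] [Field 𝕜]
    [StarRing 𝕜] [Ring A] [Nontrivial A] [StarRing A] [Algebra 𝕜 A] [StarModule 𝕜 A]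
    {a b : ι → A} (ha : ∀ i j, star (a i) * a j = if i = j then 1 else 0)
    (hb : ∀ i j, star (b i) * b j = if i = j then 1 else 0)
    {U : Matrix ι ι 𝕜} (hab : ∀ i, a i = ∑ j, U i j • b j) :
    U ∈ Matrix.unitaryGroup ι 𝕜 := by
  rw [Matrix.mem_unitaryGroup_iff]
  ext i j
  apply (algebraMap 𝕜 A).injective
  have hgram := star_sum_smul_mul_sum_smul_of_orthonormal hb (U j) (U i)
  rw [← hab, ← hab, ha, eq_comm] at hgram
  simp only [Algebra.algebraMap_eq_smul_one, Matrix.mul_apply, Matrix.star_apply,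
    Matrix.one_apply, mul_comm (U i _), hgram, eq_comm (a := i), ite_smul, one_smul, zero_smul]

theorem cuntz_kraus_rigidity_general {H : Type*} [NormedAddCommGroup H]
    [InnerProductSpace ℂ H] [CompleteSpace H]
    (M : VonNeumannAlgebra H) (Ω : H)
    (hsep : ∀ m : M.toStarSubalgebra, (m : H →L[ℂ] H) Ω = 0 → m = 0)
    (N : ℕ)
    (a b : Fin N → M.toStarSubalgebra)
    (ha1 : ∀ i j, star (a i) * a j = if i = j then 1 else 0)
    (hb1 : ∀ i j, star (b i) * b j = if i = j then 1 else 0)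
    (hspan : ∀ i, (a i : H →L[ℂ] H) Ω ∈
      Submodule.span ℂ (Set.range fun j => (b j : H →L[ℂ] H) Ω)) :
    ∃ R : Matrix (Fin N) (Fin N) ℂ, R ∈ Matrix.unitaryGroup (Fin N) ℂ ∧
      (∀ i, a i = ∑ j, R i j • b j) ∧
      (∀ m : M.toStarSubalgebra,
        ∑ i, star (a i) * m * a i = ∑ i, star (b i) * m * b i) := by
  rcases subsingleton_or_nontrivial M.toStarSubalgebra with hM | hM
  · exact ⟨1, one_mem _, fun _ => Subsingleton.elim _ _, fun _ => Subsingleton.elim _ _⟩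
  let evalΩ : M.toStarSubalgebra →ₗ[ℂ] H :=
    (ContinuousLinearMap.apply ℂ H Ω).toLinearMap ∘ₗ M.toStarSubalgebra.subtype.toLinearMap
  have hevalΩ : Function.Injective evalΩ := (injective_iff_map_eq_zero evalΩ).mpr hsep
  choose R hR using fun i => exists_eq_sum_smul_of_injective evalΩ hevalΩ (hspan i)
  have hU : R ∈ Matrix.unitaryGroup (Fin N) ℂ := mem_unitaryGroup_of_orthonormal ha1 hb1 hR
  exact ⟨R, hU, hR, sum_star_mul_mul_eq_of_star_mul_self_eq_one hU.1 hR⟩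

/-- Rigidity of Kraus channels built from Cuntz isometries: if `(a_i)` and
`(b_i)` satisfy the Cuntz relations in a von Neumann algebra `M` with separating vector `Ω`,
and each `a_i Ω` lies in the span of the `b_j Ω`, then `a_i = Σ_j R_{ij} b_j` for a unitary
matrix `R`, and the two Kraus channels coincide. -/
theorem cuntz_kraus_rigidity {H : Type*} [NormedAddCommGroup H]
    [InnerProductSpace ℂ H] [CompleteSpace H]
    (M : VonNeumannAlgebra H) (Ω : H)
    (hsep : ∀ m : M.toStarSubalgebra, (m : H →L[ℂ] H) Ω = 0 → m = 0)
    (N : ℕ) (hN : 1 ≤ N)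
    (a b : Fin N → M.toStarSubalgebra)
    (ha1 : ∀ i j, star (a i) * a j = if i = j then 1 else 0)
    (ha2 : ∑ i, a i * star (a i) = 1)
    (hb1 : ∀ i j, star (b i) * b j = if i = j then 1 else 0)
    (hb2 : ∑ i, b i * star (b i) = 1)
    (hspan : ∀ i, (a i : H →L[ℂ] H) Ω ∈
      Submodule.span ℂ (Set.range fun j => (b j : H →L[ℂ] H) Ω)) :
    ∃ R : Matrix (Fin N) (Fin N) ℂ, R ∈ Matrix.unitaryGroup (Fin N) ℂ ∧
      (∀ i, a i = ∑ j, R i j • b j) ∧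
      (∀ m : M.toStarSubalgebra,
        ∑ i, star (a i) * m * a i = ∑ i, star (b i) * m * b i) :=
  cuntz_kraus_rigidity_general M Ω hsep N a b ha1 hb1 hspan

end BSPaper
end
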